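/- arXiv:2412.19100 — 3 statements merged into one kernel-verified Lean document; each statement's English description precedes it below -/
import Mathlib

section
/- Let δ > 0 and ε > 0. Assume R₂ is positive semidefinite and FᵀF ≥ δ I_{m₂}. Let P₁ ≥ 0, P₂ ≥ 0 and Γ₁, Γ₂ ∈ ℝ^{n₂} satisfy P₁ + Γ_{1k} ≥ ε and P₂ + Γ_{2k} ≥ ε for every k = 1, …, n₂. Then for any nonempty closed set Π₂ ⊆ ℝ^{m₂}, the function v ↦ H₁₂(v, P₁, P₂, Γ₁, Γ₂) is coercive (tends to +∞ as |v| → ∞) and attains its infimum over Π₂; in particular the infimum is finite. -/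
/-!
Each pair of hinge terms dominates `ε x² - (P₁ + Γ₁ₖ)` with `x = 1 + E_k + F_k v`, and
`x² ≥ (F_k v)² / 2 - (1 + E_k)²`, so `FᵀF ≥ δ I` and `R₂ ≥ 0` give
`H₁₂(v) ≥ (εδ/2)‖v‖² - K‖v‖ - C`. Hence `H₁₂` is coercive, and being continuous it attains
its minimum on a closed set, since outside a large ball it exceeds its value at any given point.
-/

open Matrix

/-- The jump Hamiltonian `H₁₂(v,P₁,P₂,Γ₁,Γ₂)`. -/
noncomputable def H12 {m₂ n₂ : ℕ} (R₂ : Matrix (Fin m₂) (Fin m₂) ℝ)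
    (B₂ : EuclideanSpace ℝ (Fin m₂)) (E : EuclideanSpace ℝ (Fin n₂))
    (F : Matrix (Fin n₂) (Fin m₂) ℝ) (v : EuclideanSpace ℝ (Fin m₂))
    (P₁ P₂ : ℝ) (Γ₁ Γ₂ : EuclideanSpace ℝ (Fin n₂)) : ℝ :=
  (∑ i, ∑ j, v i * R₂ i j * v j)
    + (∑ k, (P₁ + Γ₁ k) * ((max (1 + E k + ∑ j, F k j * v j) 0) ^ 2 - 1))
    - 2 * P₁ * (∑ k, (E k + ∑ j, F k j * v j))
    + 2 * P₁ * (∑ i, B₂ i * v i)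
    + ∑ k, (P₂ + Γ₂ k) * (max (-(1 + E k + ∑ j, F k j * v j)) 0) ^ 2

open Filter

lemma mul_sq_sub_le_max_sq_add_max_neg_sq {p q ε : ℝ} (hp : ε ≤ p) (hq : ε ≤ q) (x : ℝ) :
    ε * x ^ 2 - p ≤ p * (max x 0 ^ 2 - 1) + q * max (-x) 0 ^ 2 := by
  rcases le_total 0 x with hx | hx
  · rw [max_eq_left hx, max_eq_right (neg_nonpos.mpr hx)]
    nlinarith
  · rw [max_eq_right hx, max_eq_left (neg_nonneg.mpr hx)]
    nlinarith

lemma half_sq_sub_sq_le_add_sq (a b : ℝ) : b ^ 2 / 2 - a ^ 2 ≤ (a + b) ^ 2 := by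
  nlinarith [sq_nonneg (2 * a + b)]

lemma abs_sum_mul_le_sum_abs_mul_norm {ι : Type*} [Fintype ι] (c : ι → ℝ)
    (v : EuclideanSpace ℝ ι) : |∑ i, c i * v i| ≤ (∑ i, |c i|) * ‖v‖ :=
  calc |∑ i, c i * v i| ≤ ∑ i, |c i| * |v i| := by
        simpa only [abs_mul] using Finset.abs_sum_le_sum_abs (fun i => c i * v i) Finset.univ
    _ ≤ ∑ i, |c i| * ‖v‖ := by
        gcongr with i
        exact PiLp.norm_apply_le v i
    _ = (∑ i, |c i|) * ‖v‖ := (Finset.sum_mul ..).symm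

lemma Matrix.PosSemidef.sum_sum_mul_mul_nonneg {ι : Type*} [Fintype ι]
    {R : Matrix ι ι ℝ} (hR : R.PosSemidef) (v : ι → ℝ) :
    0 ≤ ∑ i, ∑ j, v i * R i j * v j := by
  simpa [dotProduct, mulVec, Finset.mul_sum, mul_assoc] using hR.dotProduct_mulVec_nonneg v

lemma mul_norm_sq_le_sum_sq_of_posSemidef {ι κ : Type*} [Fintype ι] [Fintype κ]
    [DecidableEq ι] {F : Matrix κ ι ℝ} {δ : ℝ} (hF : (Fᵀ * F - δ • (1 : Matrix ι ι ℝ)).PosSemidef)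
    (v : EuclideanSpace ℝ ι) : δ * ‖v‖ ^ 2 ≤ ∑ k, (∑ j, F k j * v j) ^ 2 := by
  have h := hF.dotProduct_mulVec_nonneg v
  rw [sub_mulVec, dotProduct_sub, ← mulVec_mulVec, dotProduct_mulVec, vecMul_transpose,
    smul_mulVec, one_mulVec] at h
  rw [EuclideanSpace.real_norm_sq_eq]
  simpa [dotProduct, mulVec, sq, Finset.mul_sum, mul_left_comm] using h

lemma sum_hinge_lower_bound {κ : Type*} [Fintype κ] {p q : κ → ℝ} {ε : ℝ} (hε : 0 ≤ ε)
    (hp : ∀ k, ε ≤ p k) (hq : ∀ k, ε ≤ q k) (a b : κ → ℝ) :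
    ε * ((∑ k, b k ^ 2) / 2 - ∑ k, a k ^ 2) - ∑ k, p k
      ≤ ∑ k, p k * (max (a k + b k) 0 ^ 2 - 1) + ∑ k, q k * max (-(a k + b k)) 0 ^ 2 := by
  have hsq : (∑ k, b k ^ 2) / 2 - ∑ k, a k ^ 2 ≤ ∑ k, (a k + b k) ^ 2 := by
    rw [Finset.sum_div, ← Finset.sum_sub_distrib]
    exact Finset.sum_le_sum fun k _ => half_sq_sub_sq_le_add_sq (a k) (b k)
  calc ε * ((∑ k, b k ^ 2) / 2 - ∑ k, a k ^ 2) - ∑ k, p k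
      ≤ ∑ k, (ε * (a k + b k) ^ 2 - p k) := by
        rw [Finset.sum_sub_distrib, ← Finset.mul_sum]
        gcongr
    _ ≤ _ := by
        rw [← Finset.sum_add_distrib]
        exact Finset.sum_le_sum fun k _ =>
          mul_sq_sub_le_max_sq_add_max_neg_sq (hp k) (hq k) (a k + b k)

lemma exists_quadratic_lower_bound_H12 {m₂ n₂ : ℕ}
    {R₂ : Matrix (Fin m₂) (Fin m₂) ℝ} (B₂ : EuclideanSpace ℝ (Fin m₂))
    (E : EuclideanSpace ℝ (Fin n₂)) {F : Matrix (Fin n₂) (Fin m₂) ℝ}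
    {δ ε : ℝ} (hδ : 0 < δ) (hε : 0 < ε) (hR₂ : R₂.PosSemidef)
    (hF : ((Fᵀ * F) - δ • (1 : Matrix (Fin m₂) (Fin m₂) ℝ)).PosSemidef)
    {P₁ : ℝ} (hP₁ : 0 ≤ P₁) (P₂ : ℝ) {Γ₁ Γ₂ : EuclideanSpace ℝ (Fin n₂)}
    (hΓ₁ : ∀ k, ε ≤ P₁ + Γ₁ k) (hΓ₂ : ∀ k, ε ≤ P₂ + Γ₂ k) :
    ∃ a > 0, ∃ K C : ℝ, ∀ v : EuclideanSpace ℝ (Fin m₂),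
      a * ‖v‖ ^ 2 - K * ‖v‖ - C ≤ H12 R₂ B₂ E F v P₁ P₂ Γ₁ Γ₂ := by
  refine ⟨ε * δ / 2, by positivity, 2 * P₁ * ((∑ k, ∑ j, |F k j|) + ∑ i, |B₂ i|),
    ε * ∑ k, (1 + E k) ^ 2 + ∑ k, (P₁ + Γ₁ k) + 2 * P₁ * ∑ k, E k, fun v => ?_⟩
  have hquad := hR₂.sum_sum_mul_mul_nonneg v
  have hFv := mul_norm_sq_le_sum_sq_of_posSemidef hF v
  have hhinge := sum_hinge_lower_bound hε.le hΓ₁ hΓ₂ (fun k => 1 + E k)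
    (fun k => ∑ j, F k j * v j)
  have hlinF : |∑ k, ∑ j, F k j * v j| ≤ (∑ k, ∑ j, |F k j|) * ‖v‖ := by
    rw [Finset.sum_mul]
    exact (Finset.abs_sum_le_sum_abs _ _).trans
      (Finset.sum_le_sum fun k _ => abs_sum_mul_le_sum_abs_mul_norm (F k) v)
  have hlinB := abs_sum_mul_le_sum_abs_mul_norm B₂ v
  rw [abs_le] at hlinF hlinB
  have hsplit : ∑ k, (E k + ∑ j, F k j * v j) = ∑ k, E k + ∑ k, ∑ j, F k j * v j :=
    Finset.sum_add_distrib
  unfold H12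
  rw [hsplit]
  linarith [mul_le_mul_of_nonneg_left hFv hε.le, mul_le_mul_of_nonneg_left hlinF.2 hP₁,
    mul_le_mul_of_nonneg_left hlinB.1 hP₁]

lemma coercive_of_quadratic_lower_bound {E : Type*} [SeminormedAddCommGroup E] {f : E → ℝ}
    {a K C : ℝ} (ha : 0 < a) (hf : ∀ v, a * ‖v‖ ^ 2 - K * ‖v‖ - C ≤ f v) (c : ℝ) :
    ∃ r : ℝ, ∀ v, r ≤ ‖v‖ → c ≤ f v := by
  have hlim : Tendsto (fun t : ℝ => t * (a * t - K) - C) atTop atTop :=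
    tendsto_atTop_add_const_right _ _ <| tendsto_id.atTop_mul_atTop₀ <|
      tendsto_atTop_add_const_right _ _ <| tendsto_id.const_mul_atTop ha
  obtain ⟨r, hr⟩ := tendsto_atTop_atTop.1 hlim c
  exact ⟨r, fun v hv => (hr _ hv).trans (by linarith [hf v])⟩

lemma exists_forall_le_of_coercive {E : Type*} [NormedAddCommGroup E] [ProperSpace E]
    {f : E → ℝ} {s : Set E} (hf : ContinuousOn f s) (hs : IsClosed s) (hne : s.Nonempty)
    (hcoer : ∀ c : ℝ, ∃ r : ℝ, ∀ v, r ≤ ‖v‖ → c ≤ f v) : ∃ v ∈ s, ∀ w ∈ s, f v ≤ f w := by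
  obtain ⟨v₀, hv₀⟩ := hne
  obtain ⟨r, hr⟩ := hcoer (f v₀)
  have hfar : ∀ᶠ v in cocompact E, f v₀ ≤ f v := by
    filter_upwards [(isCompact_closedBall (0 : E) r).compl_mem_cocompact] with v hv
    simp only [Set.mem_compl_iff, Metric.mem_closedBall, dist_zero_right, not_le] at hv
    exact hr v hv.le
  obtain ⟨v, hv, hmin⟩ := hf.exists_isMinOn' hs hv₀ (hfar.filter_mono inf_le_left)
  exact ⟨v, hv, fun w hw => hmin hw⟩

lemma continuous_H12 {m₂ n₂ : ℕ} (R₂ : Matrix (Fin m₂) (Fin m₂) ℝ)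
    (B₂ : EuclideanSpace ℝ (Fin m₂)) (E : EuclideanSpace ℝ (Fin n₂))
    (F : Matrix (Fin n₂) (Fin m₂) ℝ) (P₁ P₂ : ℝ) (Γ₁ Γ₂ : EuclideanSpace ℝ (Fin n₂)) :
    Continuous fun v => H12 R₂ B₂ E F v P₁ P₂ Γ₁ Γ₂ := by
  have hcoord (i : Fin m₂) : Continuous fun v : EuclideanSpace ℝ (Fin m₂) => v i :=
    (EuclideanSpace.proj i).continuous
  unfold H12
  fun_prop

theorem H12_coercive_attains_min_singular_general
    (m₂ n₂ : ℕ)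
    (R₂ : Matrix (Fin m₂) (Fin m₂) ℝ) (B₂ : EuclideanSpace ℝ (Fin m₂))
    (E : EuclideanSpace ℝ (Fin n₂)) (F : Matrix (Fin n₂) (Fin m₂) ℝ)
    (δ ε : ℝ) (hδ : 0 < δ) (hε : 0 < ε)
    (hR₂ : R₂.PosSemidef)
    (hF : ((Fᵀ * F) - δ • (1 : Matrix (Fin m₂) (Fin m₂) ℝ)).PosSemidef)
    (P₁ P₂ : ℝ) (hP₁ : 0 ≤ P₁)
    (Γ₁ Γ₂ : EuclideanSpace ℝ (Fin n₂))
    (hΓ₁ : ∀ k, ε ≤ P₁ + Γ₁ k) (hΓ₂ : ∀ k, ε ≤ P₂ + Γ₂ k)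
    (Cone2 : Set (EuclideanSpace ℝ (Fin m₂)))
    (hne : Cone2.Nonempty) (hclosed : IsClosed Cone2) :
    (∀ c : ℝ, ∃ r : ℝ, ∀ v : EuclideanSpace ℝ (Fin m₂),
        r ≤ ‖v‖ → c ≤ H12 R₂ B₂ E F v P₁ P₂ Γ₁ Γ₂) ∧
      ∃ v ∈ Cone2, ∀ w ∈ Cone2,
        H12 R₂ B₂ E F v P₁ P₂ Γ₁ Γ₂ ≤ H12 R₂ B₂ E F w P₁ P₂ Γ₁ Γ₂ := by
  obtain ⟨a, ha, K, C, hlb⟩ :=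
    exists_quadratic_lower_bound_H12 B₂ E hδ hε hR₂ hF hP₁ P₂ hΓ₁ hΓ₂
  have hcoer := coercive_of_quadratic_lower_bound ha hlb
  exact ⟨hcoer, exists_forall_le_of_coercive (continuous_H12 ..).continuousOn hclosed hne hcoer⟩

/-- In the singular case `R₂ ≥ 0`, `FᵀF ≥ δ I`, with `P₁, P₂ ≥ 0` and `P_j + Γ_{jk} ≥ ε`, the
map `v ↦ H₁₂(v,P₁,P₂,Γ₁,Γ₂)` is coercive and attains its infimum over any nonempty closed
set. -/
theorem H12_coercive_attains_min_singular
    (m₂ n₂ : ℕ) (hm : 0 < m₂) (hn : 0 < n₂)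
    (R₂ : Matrix (Fin m₂) (Fin m₂) ℝ) (B₂ : EuclideanSpace ℝ (Fin m₂))
    (E : EuclideanSpace ℝ (Fin n₂)) (F : Matrix (Fin n₂) (Fin m₂) ℝ)
    (δ ε : ℝ) (hδ : 0 < δ) (hε : 0 < ε)
    (hR₂ : R₂.PosSemidef)
    (hF : ((Fᵀ * F) - δ • (1 : Matrix (Fin m₂) (Fin m₂) ℝ)).PosSemidef)
    (P₁ P₂ : ℝ) (hP₁ : 0 ≤ P₁) (hP₂ : 0 ≤ P₂)
    (Γ₁ Γ₂ : EuclideanSpace ℝ (Fin n₂))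
    (hΓ₁ : ∀ k, ε ≤ P₁ + Γ₁ k) (hΓ₂ : ∀ k, ε ≤ P₂ + Γ₂ k)
    (Cone2 : Set (EuclideanSpace ℝ (Fin m₂)))
    (hne : Cone2.Nonempty) (hclosed : IsClosed Cone2) :
    (∀ c : ℝ, ∃ r : ℝ, ∀ v : EuclideanSpace ℝ (Fin m₂),
        r ≤ ‖v‖ → c ≤ H12 R₂ B₂ E F v P₁ P₂ Γ₁ Γ₂) ∧
      ∃ v ∈ Cone2, ∀ w ∈ Cone2,
        H12 R₂ B₂ E F v P₁ P₂ Γ₁ Γ₂ ≤ H12 R₂ B₂ E F w P₁ P₂ Γ₁ Γ₂ :=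
  H12_coercive_attains_min_singular_general m₂ n₂ R₂ B₂ E F δ ε hδ hε hR₂ hF P₁ P₂ hP₁ Γ₁ Γ₂ hΓ₁ hΓ₂
    Cone2 hne hclosed
end

section
/- Let δ > 0, assume R₂ ≥ δ I_{m₂}, and let P ≥ 0. Then H₁₂(v, P, P, 0, 0) ≥ −δ⁻¹ |B₂|² P² for every v ∈ ℝ^{m₂}. -/
open Matrix

/-! With `P₁ = P₂ = P` and `Γ = 0` the positive- and negative-part terms of `H₁₂` recombine,
through `(y⁺)² + (y⁻)² = y²` with `y = 1 + E_k + F_k v`, into `P (E_k + F_k v)² ≥ 0`.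
What is left is `vᵀR₂v + 2P B₂ᵀv ≥ δ|v|² + 2P⟨B₂, v⟩`, and completing the square
(the minimum is at `v = -P B₂ / δ`) bounds this below by `-δ⁻¹ |B₂|² P²`. -/

theorem max_zero_sq_add_max_neg_zero_sq (y : ℝ) : max y 0 ^ 2 + max (-y) 0 ^ 2 = y ^ 2 := by
  rcases le_total 0 y with h | h <;> simp [h]

theorem Matrix.PosSemidef.mul_dotProduct_self_le_dotProduct_mulVec {ι : Type*} [Fintype ι]
    [DecidableEq ι] {R : Matrix ι ι ℝ} {δ : ℝ} (hR : (R - δ • (1 : Matrix ι ι ℝ)).PosSemidef)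
    (v : ι → ℝ) : δ * (v ⬝ᵥ v) ≤ v ⬝ᵥ R *ᵥ v := by
  have h := hR.dotProduct_mulVec_nonneg v
  simp only [star_trivial, sub_mulVec, smul_mulVec, one_mulVec, dotProduct_sub,
    dotProduct_smul, smul_eq_mul, sub_nonneg] at h
  exact h

theorem neg_inv_mul_norm_sq_le_mul_norm_sq_add_two_mul_inner {V : Type*}
    [NormedAddCommGroup V] [InnerProductSpace ℝ V] {δ : ℝ} (hδ : 0 < δ) (x y : V) :
    -δ⁻¹ * ‖x‖ ^ 2 ≤ δ * ‖y‖ ^ 2 + 2 * inner ℝ x y := by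
  have hexp := norm_add_sq_real (δ • y) x
  rw [norm_smul, Real.norm_of_nonneg hδ.le, real_inner_smul_left, real_inner_comm] at hexp
  have h : 0 ≤ δ⁻¹ * ‖δ • y + x‖ ^ 2 := by positivity
  rw [hexp] at h
  field_simp at h ⊢
  nlinarith [h]

theorem H12_diagonal_eq {m₂ n₂ : ℕ} (R₂ : Matrix (Fin m₂) (Fin m₂) ℝ)
    (B₂ : EuclideanSpace ℝ (Fin m₂)) (E : EuclideanSpace ℝ (Fin n₂))
    (F : Matrix (Fin n₂) (Fin m₂) ℝ) (v : EuclideanSpace ℝ (Fin m₂)) (P : ℝ) :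
    H12 R₂ B₂ E F v P P 0 0 =
      v ⬝ᵥ R₂ *ᵥ v + 2 * P * inner ℝ B₂ v + P * ∑ k, (E k + (F *ᵥ v) k) ^ 2 := by
  have hk : ∀ k, P * (max (1 + E k + (F *ᵥ v) k) 0 ^ 2 - 1) - 2 * P * (E k + (F *ᵥ v) k)
      + P * max (-(1 + E k + (F *ᵥ v) k)) 0 ^ 2 = P * (E k + (F *ᵥ v) k) ^ 2 := fun k => by
    linear_combination P * max_zero_sq_add_max_neg_zero_sq (1 + E k + (F *ᵥ v) k)
  simp only [H12, PiLp.zero_apply, add_zero, Finset.mul_sum,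
    ← Finset.sum_congr rfl fun k _ => hk k]
  simp only [mulVec, dotProduct, PiLp.inner_apply, RCLike.inner_apply, conj_trivial,
    Finset.sum_add_distrib, Finset.sum_sub_distrib, Finset.mul_sum,
    mul_comm (v.ofLp _) (B₂.ofLp _), mul_assoc]
  ring

theorem H12_diagonal_lower_bound_standard_general
    (m₂ n₂ : ℕ)
    (R₂ : Matrix (Fin m₂) (Fin m₂) ℝ) (B₂ : EuclideanSpace ℝ (Fin m₂))
    (E : EuclideanSpace ℝ (Fin n₂)) (F : Matrix (Fin n₂) (Fin m₂) ℝ)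
    (δ : ℝ) (hδ : 0 < δ)
    (hR₂ : (R₂ - δ • (1 : Matrix (Fin m₂) (Fin m₂) ℝ)).PosSemidef)
    (P : ℝ) (hP : 0 ≤ P) :
    ∀ v : EuclideanSpace ℝ (Fin m₂),
      -δ⁻¹ * ‖B₂‖ ^ 2 * P ^ 2 ≤
        H12 R₂ B₂ E F v P P (0 : EuclideanSpace ℝ (Fin n₂))
          (0 : EuclideanSpace ℝ (Fin n₂)) := by
  intro v
  have hquad : δ * ‖v‖ ^ 2 ≤ v ⬝ᵥ R₂ *ᵥ v := by
    rw [← real_inner_self_eq_norm_sq, EuclideanSpace.inner_eq_star_dotProduct]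
    simpa using hR₂.mul_dotProduct_self_le_dotProduct_mulVec v
  have hcross := neg_inv_mul_norm_sq_le_mul_norm_sq_add_two_mul_inner hδ (P • B₂) v
  rw [norm_smul, real_inner_smul_left, mul_pow, Real.norm_of_nonneg hP] at hcross
  have hjump : 0 ≤ P * ∑ k, (E k + (F *ᵥ v) k) ^ 2 := by positivity
  rw [H12_diagonal_eq]
  linarith

/-- If `R₂ ≥ δ I` and `P ≥ 0`, then `H₁₂(v,P,P,0,0) ≥ -δ⁻¹ |B₂|² P²` for every `v`. -/
theorem H12_diagonal_lower_bound_standard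
    (m₂ n₂ : ℕ) (hm : 0 < m₂) (hn : 0 < n₂)
    (R₂ : Matrix (Fin m₂) (Fin m₂) ℝ) (B₂ : EuclideanSpace ℝ (Fin m₂))
    (E : EuclideanSpace ℝ (Fin n₂)) (F : Matrix (Fin n₂) (Fin m₂) ℝ)
    (δ : ℝ) (hδ : 0 < δ)
    (hR₂ : (R₂ - δ • (1 : Matrix (Fin m₂) (Fin m₂) ℝ)).PosSemidef)
    (P : ℝ) (hP : 0 ≤ P) :
    ∀ v : EuclideanSpace ℝ (Fin m₂),
      -δ⁻¹ * ‖B₂‖ ^ 2 * P ^ 2 ≤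
        H12 R₂ B₂ E F v P P (0 : EuclideanSpace ℝ (Fin n₂))
          (0 : EuclideanSpace ℝ (Fin n₂)) :=
  H12_diagonal_lower_bound_standard_general m₂ n₂ R₂ B₂ E F δ hδ hR₂ P hP
end

section
/- Let δ > 0, M > 0, K > 0, and assume: R₂ ≥ δ I_{m₂}; |R₂| ≤ K, |B₂| ≤ K, |E| ≤ K, |F| ≤ K; 0 ≤ P₁ ≤ M, 0 ≤ P₂ ≤ M; and 0 ≤ P₁ + Γ_{1k} ≤ M, 0 ≤ P₂ + Γ_{2k} ≤ M for every k = 1, …, n₂. Then there exists a constant c > 0, depending only on δ, M, K and n₂ (and not on R₂, B₂, E, F, P₁, P₂, Γ₁, Γ₂ themselves), such that H₁₂(v, P₁, P₂, Γ₁, Γ₂) > H₁₂(0, P₁, P₂, Γ₁, Γ₂) for all v ∈ ℝ^{m₂} with |v| > c. Consequently, for every closed cone Π₂ ⊆ ℝ^{m₂} containing 0, one has inf_{v ∈ Π₂} H₁₂(v, P₁, P₂, Γ₁, Γ₂) = inf_{v ∈ Π₂, |v| ≤ c} H₁₂(v, P₁, P₂, Γ₁, Γ₂), and every minimizer of H₁₂(·,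 P₁, P₂, Γ₁, Γ₂) over Π₂ has norm at most c. -/
/-!
The quadratic form gives `H₁₂(v) ≥ δ|v|²`; each positive-part term is at least `-M`, the
penalty terms are nonnegative, and the drift terms are at most linear in `|v|` by Cauchy–Schwarz.
So `H₁₂(v) ≥ δt² - C₁t - C₀` with `t = |v|`, while `H₁₂(0) ≤ C₂`, all constants depending only
on `M`, `K`, `n₂`. Past a radius `c` where the quadratic exceeds `C₂` we get `H₁₂(v) > H₁₂(0)`;
since `0` lies in the cone, points outside the ball of radius `c` neither lower the infimum nor
are minimizers.
-/

open Matrix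

/-- Frobenius norm of a real matrix. -/
noncomputable def frob {m n : ℕ} (M : Matrix (Fin m) (Fin n) ℝ) : ℝ :=
  Real.sqrt (∑ i, ∑ j, (M i j) ^ 2)

lemma neg_mul_le_mul_of_abs_le {p M x X : ℝ} (hp : 0 ≤ p) (hpM : p ≤ M) (hx : |x| ≤ X) :
    -(M * X) ≤ p * x := by
  nlinarith [neg_abs_le x, abs_nonneg x]

lemma max_zero_sq_le_sq (x : ℝ) : max x 0 ^ 2 ≤ x ^ 2 := by
  rcases le_total x 0 with h | h <;> simp [h, sq_nonneg]

lemma sum_fin_le_mul {n : ℕ} {f : Fin n → ℝ} {a : ℝ} (h : ∀ k, f k ≤ a) : ∑ k, f k ≤ n * a := by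
  simpa using Finset.sum_le_card_nsmul Finset.univ f a fun k _ => h k

lemma mul_le_sum_fin {n : ℕ} {f : Fin n → ℝ} {a : ℝ} (h : ∀ k, a ≤ f k) : n * a ≤ ∑ k, f k := by
  simpa using Finset.card_nsmul_le_sum Finset.univ f a fun k _ => h k

lemma exists_forall_lt_mul_sq_sub {δ : ℝ} (hδ : 0 < δ) (C₀ C₁ C₂ : ℝ) :
    ∃ c > 0, ∀ t, c < t → C₂ < δ * t ^ 2 - C₁ * t - C₀ := by
  set A := |C₀| + |C₁| + |C₂|
  have hA : 0 ≤ A := by positivity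
  refine ⟨1 + A / δ, by positivity, fun t ht => ?_⟩
  have hδt : A < δ * (t - 1) := by
    rw [← div_lt_iff₀' hδ]; linarith
  nlinarith [le_abs_self C₀, le_abs_self C₁, le_abs_self C₂, abs_nonneg C₀, abs_nonneg C₂]

/- No boundedness hypothesis is needed: if `f` is unbounded below on `S`, it is so on the
smaller set as well, and both sides are the junk value `sInf ∅`. -/
theorem csInf_image_eq_csInf_image_sep {α β : Type*} [ConditionallyCompleteLinearOrder β]
    {f : α → β} {S : Set α} {p : α → Prop} {x₀ : α} (hx₀S : x₀ ∈ S) (hx₀ : p x₀)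
    (hlt : ∀ x, ¬p x → f x₀ < f x) :
    sInf (f '' S) = sInf (f '' {x ∈ S | p x}) := by
  refine csInf_eq_csInf_of_forall_exists_le ?_ ?_
  · rintro _ ⟨x, hxS, rfl⟩
    by_cases hx : p x
    · exact ⟨f x, ⟨x, ⟨hxS, hx⟩, rfl⟩, le_rfl⟩
    · exact ⟨f x₀, ⟨x₀, ⟨hx₀S, hx₀⟩, rfl⟩, (hlt x hx).le⟩
  · rintro _ ⟨x, hx, rfl⟩
    exact ⟨f x, ⟨x, hx.1, rfl⟩, le_rfl⟩

section Euclidean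

variable {ι : Type*} [Fintype ι]

lemma abs_apply_le_of_norm_le {x : EuclideanSpace ℝ ι} {K : ℝ} (hx : ‖x‖ ≤ K) (i : ι) :
    |x i| ≤ K :=
  (PiLp.norm_apply_le x i).trans hx

lemma abs_sum_mul_le_norm_mul_norm (w v : EuclideanSpace ℝ ι) :
    |∑ i, w i * v i| ≤ ‖w‖ * ‖v‖ := by
  simpa [PiLp.inner_apply, mul_comm] using abs_real_inner_le_norm w v

lemma mul_norm_sq_le_quadForm_of_posSemidef_sub [DecidableEq ι] {R : Matrix ι ι ℝ} {δ : ℝ}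
    (hR : (R - δ • (1 : Matrix ι ι ℝ)).PosSemidef) (v : EuclideanSpace ℝ ι) :
    δ * ‖v‖ ^ 2 ≤ ∑ i, ∑ j, v i * R i j * v j := by
  have h := hR.dotProduct_mulVec_nonneg v.ofLp
  rw [star_trivial, sub_mulVec, smul_mulVec, one_mulVec, dotProduct_sub, dotProduct_smul,
    sub_nonneg] at h
  rw [EuclideanSpace.real_norm_sq_eq]
  simpa [dotProduct, mulVec, Finset.mul_sum, mul_assoc, sq] using h

end Euclidean

lemma abs_sum_row_mul_le_frob_mul_norm {m n : ℕ} (F : Matrix (Fin m) (Fin n) ℝ) (k : Fin m)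
    (v : EuclideanSpace ℝ (Fin n)) : |∑ j, F k j * v j| ≤ frob F * ‖v‖ := by
  have hrow : ‖WithLp.toLp 2 (F k)‖ ≤ frob F := by
    rw [EuclideanSpace.norm_eq, frob]
    refine Real.sqrt_le_sqrt ?_
    simpa using Finset.single_le_sum (f := fun i => ∑ j, F i j ^ 2)
      (fun i _ => by positivity) (Finset.mem_univ k)
  exact (abs_sum_mul_le_norm_mul_norm (WithLp.toLp 2 (F k)) v).trans
    (mul_le_mul_of_nonneg_right hrow (norm_nonneg v))

section H12Bounds

variable {m n : ℕ} {R₂ : Matrix (Fin m) (Fin m) ℝ} {B₂ : EuclideanSpace ℝ (Fin m)}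
  {E : EuclideanSpace ℝ (Fin n)} {F : Matrix (Fin n) (Fin m) ℝ} {P₁ P₂ M K : ℝ}
  {Γ₁ Γ₂ : EuclideanSpace ℝ (Fin n)}

lemma quadratic_le_H12 {δ : ℝ} (hR : (R₂ - δ • (1 : Matrix (Fin m) (Fin m) ℝ)).PosSemidef)
    (hB : ‖B₂‖ ≤ K) (hE : ‖E‖ ≤ K) (hF : frob F ≤ K) (hP₁ : 0 ≤ P₁) (hP₁M : P₁ ≤ M)
    (hΓ₁ : ∀ k, 0 ≤ P₁ + Γ₁ k ∧ P₁ + Γ₁ k ≤ M) (hΓ₂ : ∀ k, 0 ≤ P₂ + Γ₂ k)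
    (v : EuclideanSpace ℝ (Fin m)) :
    δ * ‖v‖ ^ 2 - 2 * M * K * (n + 1) * ‖v‖ - n * M * (1 + 2 * K)
      ≤ H12 R₂ B₂ E F v P₁ P₂ Γ₁ Γ₂ := by
  have hFv (k : Fin n) : |∑ j, F k j * v j| ≤ K * ‖v‖ :=
    (abs_sum_row_mul_le_frob_mul_norm F k v).trans
      (mul_le_mul_of_nonneg_right hF (norm_nonneg v))
  have hquad := mul_norm_sq_le_quadForm_of_posSemidef_sub hR v
  have hjump : n * (-M) ≤ ∑ k, (P₁ + Γ₁ k) * (max (1 + E k + ∑ j, F k j * v j) 0 ^ 2 - 1) :=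
    mul_le_sum_fin fun k => by
      nlinarith [hΓ₁ k, mul_nonneg (hΓ₁ k).1 (sq_nonneg (max (1 + E k + ∑ j, F k j * v j) 0))]
  have hsum : |∑ k, (E k + ∑ j, F k j * v j)| ≤ n * (K + K * ‖v‖) :=
    (Finset.abs_sum_le_sum_abs _ _).trans <| sum_fin_le_mul fun k =>
      (abs_add_le _ _).trans (add_le_add (abs_apply_le_of_norm_le hE k) (hFv k))
  have hdrift := neg_mul_le_mul_of_abs_le hP₁ hP₁M ((abs_neg _).trans_le hsum)
  have hlin := neg_mul_le_mul_of_abs_le hP₁ hP₁M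
    ((abs_sum_mul_le_norm_mul_norm B₂ v).trans (mul_le_mul_of_nonneg_right hB (norm_nonneg v)))
  have hpen : 0 ≤ ∑ k, (P₂ + Γ₂ k) * max (-(1 + E k + ∑ j, F k j * v j)) 0 ^ 2 :=
    Finset.sum_nonneg fun k _ => mul_nonneg (hΓ₂ k) (sq_nonneg _)
  unfold H12
  linarith

lemma H12_zero_le (hE : ‖E‖ ≤ K) (hP₁ : 0 ≤ P₁) (hP₁M : P₁ ≤ M)
    (hΓ₁ : ∀ k, 0 ≤ P₁ + Γ₁ k ∧ P₁ + Γ₁ k ≤ M) (hΓ₂ : ∀ k, P₂ + Γ₂ k ≤ M) :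
    H12 R₂ B₂ E F 0 P₁ P₂ Γ₁ Γ₂ ≤ n * M * (2 * (1 + K) ^ 2 + 2 * K) := by
  have hshift (k : Fin n) : (1 + E k) ^ 2 ≤ (1 + K) ^ 2 := by
    have := abs_le.1 (abs_apply_le_of_norm_le hE k)
    exact sq_le_sq' (by linarith) (by linarith)
  have hjump : ∑ k, (P₁ + Γ₁ k) * (max (1 + E k) 0 ^ 2 - 1) ≤ n * (M * (1 + K) ^ 2) :=
    sum_fin_le_mul fun k => by
      nlinarith [hΓ₁ k, hshift k, max_zero_sq_le_sq (1 + E k)]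
  have hdrift : -(M * (n * K)) ≤ P₁ * ∑ k, E k :=
    neg_mul_le_mul_of_abs_le hP₁ hP₁M <| (Finset.abs_sum_le_sum_abs _ _).trans <|
      sum_fin_le_mul (abs_apply_le_of_norm_le hE)
  have hpen : ∑ k, (P₂ + Γ₂ k) * max (-(1 + E k)) 0 ^ 2 ≤ n * (M * (1 + K) ^ 2) :=
    sum_fin_le_mul fun k => by
      nlinarith [hΓ₁ k, hΓ₂ k, hshift k, max_zero_sq_le_sq (-(1 + E k)), neg_sq (1 + E k),
        sq_nonneg (max (-(1 + E k)) 0)]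
  simp only [H12, PiLp.zero_apply, mul_zero, zero_mul, Finset.sum_const_zero, add_zero]
  linarith

end H12Bounds

theorem H12_inf_on_bounded_domain_general
    (m₂ n₂ : ℕ)
    (δ M K : ℝ) (hδ : 0 < δ) :
    ∃ c > (0 : ℝ),
      ∀ (R₂ : Matrix (Fin m₂) (Fin m₂) ℝ) (B₂ : EuclideanSpace ℝ (Fin m₂))
        (E : EuclideanSpace ℝ (Fin n₂)) (F : Matrix (Fin n₂) (Fin m₂) ℝ)
        (P₁ P₂ : ℝ) (Γ₁ Γ₂ : EuclideanSpace ℝ (Fin n₂)),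
        (R₂ - δ • (1 : Matrix (Fin m₂) (Fin m₂) ℝ)).PosSemidef →
        frob R₂ ≤ K → ‖B₂‖ ≤ K → ‖E‖ ≤ K → frob F ≤ K →
        0 ≤ P₁ → P₁ ≤ M → 0 ≤ P₂ → P₂ ≤ M →
        (∀ k, 0 ≤ P₁ + Γ₁ k ∧ P₁ + Γ₁ k ≤ M) →
        (∀ k, 0 ≤ P₂ + Γ₂ k ∧ P₂ + Γ₂ k ≤ M) →
        (∀ v : EuclideanSpace ℝ (Fin m₂), c < ‖v‖ →
            H12 R₂ B₂ E F (0 : EuclideanSpace ℝ (Fin m₂)) P₁ P₂ Γ₁ Γ₂ <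
              H12 R₂ B₂ E F v P₁ P₂ Γ₁ Γ₂) ∧
          ∀ Cone2 : Set (EuclideanSpace ℝ (Fin m₂)),
            IsClosed Cone2 → (∀ v ∈ Cone2, ∀ l : ℝ, 0 ≤ l → l • v ∈ Cone2) →
            (0 : EuclideanSpace ℝ (Fin m₂)) ∈ Cone2 →
            (sInf ((fun v => H12 R₂ B₂ E F v P₁ P₂ Γ₁ Γ₂) '' Cone2) =
                sInf ((fun v => H12 R₂ B₂ E F v P₁ P₂ Γ₁ Γ₂) ''
                  {v ∈ Cone2 | ‖v‖ ≤ c})) ∧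
              ∀ v ∈ Cone2,
                (∀ w ∈ Cone2,
                    H12 R₂ B₂ E F v P₁ P₂ Γ₁ Γ₂ ≤ H12 R₂ B₂ E F w P₁ P₂ Γ₁ Γ₂) →
                ‖v‖ ≤ c := by
  obtain ⟨c, hc, hquad⟩ := exists_forall_lt_mul_sq_sub hδ (n₂ * M * (1 + 2 * K))
    (2 * M * K * (n₂ + 1)) (n₂ * M * (2 * (1 + K) ^ 2 + 2 * K))
  refine ⟨c, hc, fun R₂ B₂ E F P₁ P₂ Γ₁ Γ₂ hR _ hB hE hF hP₁ hP₁M _ _ hΓ₁ hΓ₂ => ?_⟩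
  have hcoercive (v : EuclideanSpace ℝ (Fin m₂)) (hv : c < ‖v‖) :
      H12 R₂ B₂ E F 0 P₁ P₂ Γ₁ Γ₂ < H12 R₂ B₂ E F v P₁ P₂ Γ₁ Γ₂ :=
    (H12_zero_le hE hP₁ hP₁M hΓ₁ fun k => (hΓ₂ k).2).trans_lt <|
      (hquad _ hv).trans_le (quadratic_le_H12 hR hB hE hF hP₁ hP₁M hΓ₁ (fun k => (hΓ₂ k).1) v)
  refine ⟨hcoercive, fun Cone2 _ _ h0 => ⟨?_, fun v _ hmin => ?_⟩⟩
  · exact csInf_image_eq_csInf_image_sep h0 (by simpa using hc.le)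
      fun v hv => hcoercive v (not_le.1 hv)
  · exact le_of_not_gt fun hv => (hmin 0 h0).not_gt (hcoercive v hv)

/-- Uniform reduction of the constrained infimum of `H₁₂` to a bounded domain: under
`R₂ ≥ δI`, Frobenius/Euclidean bounds `K` on the data, and the a priori bounds `M` on
`P₁, P₂, P_j + Γ_{jk}`, there is a constant `c` depending only on `δ, M, K, n₂` such that
`H₁₂(v, ·) > H₁₂(0, ·)` whenever `|v| > c`; hence the infimum over any closed cone `Π₂ ∋ 0`
equals the infimum over `{v ∈ Π₂ : |v| ≤ c}` and every minimizer has norm at most `c`. -/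
theorem H12_inf_on_bounded_domain
    (m₂ n₂ : ℕ) (hm : 0 < m₂) (hn : 0 < n₂)
    (δ M K : ℝ) (hδ : 0 < δ) (hM : 0 < M) (hK : 0 < K) :
    ∃ c > (0 : ℝ),
      ∀ (R₂ : Matrix (Fin m₂) (Fin m₂) ℝ) (B₂ : EuclideanSpace ℝ (Fin m₂))
        (E : EuclideanSpace ℝ (Fin n₂)) (F : Matrix (Fin n₂) (Fin m₂) ℝ)
        (P₁ P₂ : ℝ) (Γ₁ Γ₂ : EuclideanSpace ℝ (Fin n₂)),
        (R₂ - δ • (1 : Matrix (Fin m₂) (Fin m₂) ℝ)).PosSemidef →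
        frob R₂ ≤ K → ‖B₂‖ ≤ K → ‖E‖ ≤ K → frob F ≤ K →
        0 ≤ P₁ → P₁ ≤ M → 0 ≤ P₂ → P₂ ≤ M →
        (∀ k, 0 ≤ P₁ + Γ₁ k ∧ P₁ + Γ₁ k ≤ M) →
        (∀ k, 0 ≤ P₂ + Γ₂ k ∧ P₂ + Γ₂ k ≤ M) →
        (∀ v : EuclideanSpace ℝ (Fin m₂), c < ‖v‖ →
            H12 R₂ B₂ E F (0 : EuclideanSpace ℝ (Fin m₂)) P₁ P₂ Γ₁ Γ₂ <
              H12 R₂ B₂ E F v P₁ P₂ Γ₁ Γ₂) ∧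
          ∀ Cone2 : Set (EuclideanSpace ℝ (Fin m₂)),
            IsClosed Cone2 → (∀ v ∈ Cone2, ∀ l : ℝ, 0 ≤ l → l • v ∈ Cone2) →
            (0 : EuclideanSpace ℝ (Fin m₂)) ∈ Cone2 →
            (sInf ((fun v => H12 R₂ B₂ E F v P₁ P₂ Γ₁ Γ₂) '' Cone2) =
                sInf ((fun v => H12 R₂ B₂ E F v P₁ P₂ Γ₁ Γ₂) ''
                  {v ∈ Cone2 | ‖v‖ ≤ c})) ∧
              ∀ v ∈ Cone2,
                (∀ w ∈ Cone2,
                    H12 R₂ B₂ E F v P₁ P₂ Γ₁ Γ₂ ≤ H12 R₂ B₂ E F w P₁ P₂ Γ₁ Γ₂) →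
                ‖v‖ ≤ c :=
  H12_inf_on_bounded_domain_general m₂ n₂ δ M K hδ
end
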